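/- Let 1 ≤ j ≤ k ≤ dim E. There exists a constant c > 1 such that for every j-dimensional subspace U ⊆ E and every k-dimensional subspace V ⊆ E one has (1/c)·dist(V, Gr_k(E)_U) ≤ δ(U, V) ≤ c·dist(V, Gr_k(E)_U). -/

import Mathlib

/-!
Write `δ = δ(U,V)`. For every `L ⊇ U` we have `P_U - P_V P_U = (P_L - P_V) P_U`, so
`δ ≤ ‖P_V - P_L‖`. Conversely, if `δ ≤ 1/2` take `L = U ⊕ (Uᗮ ⊓ V)`. Since `P_V` is self-adjoint,
`Uᗮ ⊓ V = (P_V U)ᗮ ⊓ V`, and `P_V` is injective on `U` as `δ < 1`, so `dim L = k`. The summands are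
orthogonal, hence `δ(L,V) ≤ δ`; as `dim L = dim V`, `P_V` maps `L` onto `V`, which gives
`δ(V,L) ≤ 2 δ(L,V)`; and `P_V - P_L = (1 - P_L) P_V - ((1 - P_V) P_L)†` gives
`‖P_V - P_L‖ ≤ δ(V,L) + δ(L,V) ≤ 3δ`. If `δ > 1/2`, any `L` works since `‖P_V - P_L‖ ≤ 2`;
so `c = 4`.
-/

open Module Submodule

noncomputable section

variable {E : Type*} [NormedAddCommGroup E] [InnerProductSpace ℝ E] [FiniteDimensional ℝ E]

/-- The orthogonal projection onto a subspace `U`, viewed as a continuous linear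
endomorphism of `E`. -/
noncomputable def projCLM (U : Submodule ℝ E) : E →L[ℝ] E :=
  U.subtypeL.comp (orthogonalProjection U)

/-- The gap `δ(U,V) := ‖P_U - P_V ∘ P_U‖` between two subspaces. -/
noncomputable def gap (U V : Submodule ℝ E) : ℝ :=
  ‖projCLM U - (projCLM V).comp (projCLM U)‖

theorem Submodule.exists_le_finrank_eq {K V : Type*} [DivisionRing K] [AddCommGroup V]
    [Module K V] [Module.Finite K V] (U : Submodule K V) {m : ℕ} (hUm : finrank K U ≤ m)
    (hm : m ≤ finrank K V) : ∃ L : Submodule K V, U ≤ L ∧ finrank K L = m := by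
  induction m, hUm using Nat.le_induction with
  | base => exact ⟨U, le_rfl, rfl⟩
  | succ n _ ih =>
    obtain ⟨L, hUL, hL⟩ := ih (by omega)
    have hL_ne : L ≠ ⊤ := by
      rintro rfl
      rw [finrank_top] at hL
      omega
    obtain ⟨x, -, hx⟩ := SetLike.exists_of_lt hL_ne.lt_top
    exact ⟨L ⊔ K ∙ x, le_sup_of_le_left hUL, by rw [finrank_sup_span_singleton hx, hL]⟩

lemma projCLM_eq_starProjection (U : Submodule ℝ E) : projCLM U = U.starProjection := rfl

lemma norm_projCLM_le (U : Submodule ℝ E) : ‖projCLM U‖ ≤ 1 := starProjection_norm_le U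

lemma norm_projCLM_sub_projCLM_le_two (U V : Submodule ℝ E) : ‖projCLM U - projCLM V‖ ≤ 2 :=
  (norm_sub_le _ _).trans <| by linarith [norm_projCLM_le U, norm_projCLM_le V]

lemma norm_sub_projCLM_le_gap_mul {U : Submodule ℝ E} (V : Submodule ℝ E) {u : E} (hu : u ∈ U) :
    ‖u - projCLM V u‖ ≤ gap U V * ‖u‖ := by
  have hPu : projCLM U u = u := starProjection_eq_self_iff.2 hu
  simpa [gap, hPu] using (projCLM U - (projCLM V).comp (projCLM U)).le_opNorm u

lemma gap_le_of_forall_norm_sub_le {U V : Submodule ℝ E} {C : ℝ} (hC : 0 ≤ C)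
    (h : ∀ u ∈ U, ‖u - projCLM V u‖ ≤ C * ‖u‖) : gap U V ≤ C := by
  refine ContinuousLinearMap.opNorm_le_bound _ hC fun x => ?_
  calc ‖projCLM U x - projCLM V (projCLM U x)‖
      ≤ C * ‖projCLM U x‖ := h _ (starProjection_apply_mem U x)
    _ ≤ C * ‖x‖ := by gcongr; exact U.norm_starProjection_apply_le x

lemma gap_le_norm_projCLM_sub_of_le {U L : Submodule ℝ E} (V : Submodule ℝ E) (hUL : U ≤ L) :
    gap U V ≤ ‖projCLM V - projCLM L‖ := by
  refine gap_le_of_forall_norm_sub_le (norm_nonneg _) fun u hu => ?_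
  have hPu : projCLM L u = u := starProjection_eq_self_iff.2 (hUL hu)
  simpa [hPu, norm_sub_rev] using (projCLM V - projCLM L).le_opNorm u

lemma norm_projCLM_sub_le_gap_add_gap (V L : Submodule ℝ E) :
    ‖projCLM V - projCLM L‖ ≤ gap V L + gap L V := by
  have hadj : ContinuousLinearMap.adjoint (projCLM L - (projCLM V).comp (projCLM L))
      = projCLM L - (projCLM L).comp (projCLM V) := by
    simp only [map_sub, ContinuousLinearMap.adjoint_comp, projCLM_eq_starProjection,
      (isSelfAdjoint_starProjection _).adjoint_eq]
  have hsplit : projCLM V - projCLM L = (projCLM V - (projCLM L).comp (projCLM V))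
      - ContinuousLinearMap.adjoint (projCLM L - (projCLM V).comp (projCLM L)) := by
    rw [hadj]; ext x; simp
  rw [hsplit, gap, gap]
  exact (norm_sub_le _ _).trans_eq (by rw [LinearIsometryEquiv.norm_map])

lemma one_sub_gap_mul_norm_le_norm_projCLM {U V : Submodule ℝ E} {u : E} (hu : u ∈ U) :
    (1 - gap U V) * ‖u‖ ≤ ‖projCLM V u‖ := by
  have := norm_sub_projCLM_le_gap_mul V hu
  have := norm_le_insert' u (projCLM V u)
  linarith

lemma finrank_map_projCLM_of_gap_lt_one {U V : Submodule ℝ E} (h : gap U V < 1) :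
    finrank ℝ (U.map (projCLM V).toLinearMap) = finrank ℝ U := by
  rw [← LinearMap.range_domRestrict]
  refine LinearMap.finrank_range_of_inj <| (injective_iff_map_eq_zero _).2 fun u hu => ?_
  have hle := one_sub_gap_mul_norm_le_norm_projCLM (V := V) u.2
  rw [show projCLM V u = 0 from hu, norm_zero] at hle
  exact norm_eq_zero.1 <| le_antisymm (nonpos_of_mul_nonpos_right hle (by linarith)) (norm_nonneg _)

lemma map_projCLM_eq_of_gap_lt_one {L V : Submodule ℝ E} (h : gap L V < 1)
    (hdim : finrank ℝ V ≤ finrank ℝ L) : L.map (projCLM V).toLinearMap = V := by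
  refine eq_of_le_of_finrank_le ?_ (by rwa [finrank_map_projCLM_of_gap_lt_one h])
  rintro _ ⟨x, -, rfl⟩
  exact starProjection_apply_mem V x

lemma gap_le_two_mul_gap_of_le_half {L V : Submodule ℝ E} (h : gap L V ≤ 1 / 2)
    (hdim : finrank ℝ V ≤ finrank ℝ L) : gap V L ≤ 2 * gap L V := by
  have hgap : 0 ≤ gap L V := norm_nonneg _
  refine gap_le_of_forall_norm_sub_le (by positivity) fun v hv => ?_
  rw [← map_projCLM_eq_of_gap_lt_one (by linarith) hdim] at hv
  obtain ⟨x, hx, rfl⟩ := hv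
  have hx_le : (1 - gap L V) * ‖x‖ ≤ ‖projCLM V x‖ := one_sub_gap_mul_norm_le_norm_projCLM hx
  calc ‖projCLM V x - projCLM L (projCLM V x)‖
      ≤ ‖projCLM V x - x‖ := by
        rw [projCLM_eq_starProjection L, starProjection_minimal]
        exact ciInf_le ⟨0, by rintro _ ⟨y, rfl⟩; exact norm_nonneg _⟩ (⟨x, hx⟩ : L)
    _ ≤ gap L V * ‖x‖ := by rw [norm_sub_rev]; exact norm_sub_projCLM_le_gap_mul V hx
    _ ≤ gap L V * (2 * ‖projCLM V x‖) := by gcongr; nlinarith [norm_nonneg x]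
    _ = 2 * gap L V * ‖projCLM V x‖ := by ring

lemma orthogonal_map_projCLM_inf (U V : Submodule ℝ E) :
    (U.map (projCLM V).toLinearMap)ᗮ ⊓ V = Uᗮ ⊓ V := by
  ext w
  refine ⟨fun ⟨hw, hwV⟩ => ⟨fun u hu => ?_, hwV⟩, fun ⟨hw, hwV⟩ => ⟨?_, hwV⟩⟩
  · have := hw _ ⟨u, hu, rfl⟩
    rwa [ContinuousLinearMap.coe_coe, projCLM_eq_starProjection, inner_starProjection_left_eq_right,
      starProjection_eq_self_iff.2 hwV] at this
  · rintro _ ⟨u, hu, rfl⟩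
    rw [ContinuousLinearMap.coe_coe, projCLM_eq_starProjection, inner_starProjection_left_eq_right,
      starProjection_eq_self_iff.2 hwV]
    exact hw u hu

lemma finrank_sup_orthogonal_inf_of_gap_lt_one {U V : Submodule ℝ E} (h : gap U V < 1)
    (hUV : finrank ℝ U ≤ finrank ℝ V) : finrank ℝ (U ⊔ Uᗮ ⊓ V : Submodule ℝ E) = finrank ℝ V := by
  have hW : finrank ℝ (Uᗮ ⊓ V : Submodule ℝ E) = finrank ℝ V - finrank ℝ U := by
    rw [← orthogonal_map_projCLM_inf]
    refine finrank_add_inf_finrank_orthogonal' ?_ ?_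
    · rintro _ ⟨x, -, rfl⟩
      exact starProjection_apply_mem V x
    · rw [finrank_map_projCLM_of_gap_lt_one h]; omega
  have hdisj : U ⊓ (Uᗮ ⊓ V) = ⊥ := by rw [← inf_assoc, inf_orthogonal_eq_bot, bot_inf_eq]
  have := finrank_sup_add_finrank_inf_eq U (Uᗮ ⊓ V)
  rw [hdisj, finrank_bot, hW] at this
  omega

lemma gap_sup_orthogonal_inf_le (U V : Submodule ℝ E) : gap (U ⊔ Uᗮ ⊓ V) V ≤ gap U V := by
  refine gap_le_of_forall_norm_sub_le (norm_nonneg _) fun x hx => ?_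
  obtain ⟨u, hu, w, ⟨hwU, hwV⟩, rfl⟩ := mem_sup.1 hx
  have hPw : projCLM V w = w := starProjection_eq_self_iff.2 hwV
  have huw : ‖u‖ ≤ ‖u + w‖ := by
    refine le_of_pow_le_pow_left₀ two_ne_zero (norm_nonneg _) ?_
    nlinarith [norm_add_sq_eq_norm_sq_add_norm_sq_real (hwU u hu), mul_self_nonneg ‖w‖]
  calc ‖u + w - projCLM V (u + w)‖ = ‖u - projCLM V u‖ := by rw [map_add, hPw, add_sub_add_right_eq_sub]
    _ ≤ gap U V * ‖u‖ := norm_sub_projCLM_le_gap_mul V hu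
    _ ≤ gap U V * ‖u + w‖ := by gcongr; exact norm_nonneg _

lemma exists_le_norm_projCLM_sub_le_three_mul_gap {U V : Submodule ℝ E} (h : gap U V ≤ 1 / 2)
    (hUV : finrank ℝ U ≤ finrank ℝ V) :
    ∃ L : Submodule ℝ E, finrank ℝ L = finrank ℝ V ∧ U ≤ L ∧
      ‖projCLM V - projCLM L‖ ≤ 3 * gap U V := by
  have hL_dim := finrank_sup_orthogonal_inf_of_gap_lt_one (by linarith) hUV
  have hLV := gap_sup_orthogonal_inf_le U V
  refine ⟨U ⊔ Uᗮ ⊓ V, hL_dim, le_sup_left, ?_⟩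
  calc _ ≤ gap V (U ⊔ Uᗮ ⊓ V) + gap (U ⊔ Uᗮ ⊓ V) V := norm_projCLM_sub_le_gap_add_gap _ _
    _ ≤ 2 * gap (U ⊔ Uᗮ ⊓ V) V + gap (U ⊔ Uᗮ ⊓ V) V :=
        by gcongr; exact gap_le_two_mul_gap_of_le_half (hLV.trans h) hL_dim.ge
    _ ≤ 3 * gap U V := by linarith

theorem gap_comparable_dist_to_flag_general (j k : ℕ) (hjk : j ≤ k)
    (hk : k ≤ finrank ℝ E) :
    ∃ c : ℝ, 1 < c ∧
      ∀ U V : Submodule ℝ E, finrank ℝ U = j → finrank ℝ V = k →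
        (1 / c) * sInf {r : ℝ | ∃ L : Submodule ℝ E,
              finrank ℝ L = k ∧ U ≤ L ∧ r = ‖projCLM V - projCLM L‖}
            ≤ gap U V ∧
          gap U V ≤ c * sInf {r : ℝ | ∃ L : Submodule ℝ E,
              finrank ℝ L = k ∧ U ≤ L ∧ r = ‖projCLM V - projCLM L‖} := by
  refine ⟨4, by norm_num, fun U V hU hV => ?_⟩
  set S := {r : ℝ | ∃ L : Submodule ℝ E, finrank ℝ L = k ∧ U ≤ L ∧ r = ‖projCLM V - projCLM L‖}
  have hgap : 0 ≤ gap U V := norm_nonneg _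
  obtain ⟨L₀, hUL₀, hL₀⟩ := U.exists_le_finrank_eq (hU ▸ hjk) hk
  have hS_bdd : BddBelow S := ⟨0, by rintro _ ⟨L, -, -, rfl⟩; exact norm_nonneg _⟩
  have hgap_le : gap U V ≤ sInf S :=
    le_csInf ⟨_, L₀, hL₀, hUL₀, rfl⟩ fun _ ⟨L, _, hUL, hr⟩ => hr ▸ gap_le_norm_projCLM_sub_of_le V hUL
  have hS_le : sInf S ≤ 4 * gap U V := by
    by_cases h : gap U V ≤ 1 / 2
    · obtain ⟨L, hL, hUL, hLV⟩ := exists_le_norm_projCLM_sub_le_three_mul_gap h (hU ▸ hV ▸ hjk)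
      exact (csInf_le hS_bdd ⟨L, hL.trans hV, hUL, rfl⟩).trans (by linarith)
    · exact (csInf_le hS_bdd ⟨L₀, hL₀, hUL₀, rfl⟩).trans
        ((norm_projCLM_sub_projCLM_le_two V L₀).trans (by linarith))
  constructor <;> linarith

/-- Let `1 ≤ j ≤ k ≤ dim E`.  There is a constant `c > 1` such that for every
`j`-dimensional subspace `U` and every `k`-dimensional subspace `V`,
`(1/c)·dist(V, Gr_k(E)_U) ≤ δ(U,V) ≤ c·dist(V, Gr_k(E)_U)`, where
`dist(V, Gr_k(E)_U) = inf { ‖P_V - P_L‖ : dim L = k, U ⊆ L }`. -/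
theorem gap_comparable_dist_to_flag (j k : ℕ) (hj : 1 ≤ j) (hjk : j ≤ k)
    (hk : k ≤ finrank ℝ E) :
    ∃ c : ℝ, 1 < c ∧
      ∀ U V : Submodule ℝ E, finrank ℝ U = j → finrank ℝ V = k →
        (1 / c) * sInf {r : ℝ | ∃ L : Submodule ℝ E,
              finrank ℝ L = k ∧ U ≤ L ∧ r = ‖projCLM V - projCLM L‖}
            ≤ gap U V ∧
          gap U V ≤ c * sInf {r : ℝ | ∃ L : Submodule ℝ E,
              finrank ℝ L = k ∧ U ≤ L ∧ r = ‖projCLM V - projCLM L‖} :=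
  gap_comparable_dist_to_flag_general j k hjk hk
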